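/- arXiv:1701.07694 — 2 statements merged into one kernel-verified Lean document; each statement's English description precedes it below -/
import Mathlib

section
/- If N ≥ 2, the characteristic polynomial of T equals X^{N−2} · (X² − R·X − S²/4) in ℂ[X]; consequently T has the two eigenvalues (R ± √(R² + S²))/2 and the eigenvalue 0 with multiplicity N − 2. -/
/-! A sum of two rank-one matrices `u vᵀ + w zᵀ` factors as `U * V` with `U` of size `N × 2`, so by
Sylvester's identity its characteristic polynomial is `X ^ (N - 2)` times that of the `2 × 2` matrix
`V * U` of dot products. For `T` this matrix has trace `Re a_n` and determinant
`(|a_n|² - ‖a‖²) / 4 = -S² / 4`; the eigenvalues are then the roots of the quadratic factor. -/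

open Matrix Polynomial

namespace Matrix

variable {n R : Type*} [CommRing R]

theorem vecMulVec_add_vecMulVec_eq_mul (u v w z : n → R) :
    vecMulVec u v + vecMulVec w z = (of ![u, w])ᵀ * of ![v, z] := by
  ext i j
  simp [mul_apply, Fin.sum_univ_two, vecMulVec_apply]

theorem mul_transpose_of_fin_two (u v w z : n → R) [Fintype n] :
    of ![v, z] * (of ![u, w])ᵀ = !![v ⬝ᵥ u, v ⬝ᵥ w; z ⬝ᵥ u, z ⬝ᵥ w] := by
  ext i j
  fin_cases i <;> fin_cases j <;> rfl

theorem charpoly_vecMulVec_add_vecMulVec [Fintype n] [DecidableEq n] [Nontrivial R]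
    (u v w z : n → R) (hn : 2 ≤ Fintype.card n) :
    (vecMulVec u v + vecMulVec w z).charpoly =
      X ^ (Fintype.card n - 2) * (X ^ 2 - C (v ⬝ᵥ u + z ⬝ᵥ w) * X +
        C ((v ⬝ᵥ u) * (z ⬝ᵥ w) - (v ⬝ᵥ w) * (z ⬝ᵥ u))) := by
  rw [vecMulVec_add_vecMulVec_eq_mul, charpoly_mul_comm_of_le _ _ (by simpa using hn),
    Fintype.card_fin, mul_transpose_of_fin_two, charpoly_fin_two, trace_fin_two_of,
    det_fin_two_of]

open ComplexConjugate in
theorem dotProduct_star_self_eq_add_sum_erase {ι : Type*} [Fintype ι] [DecidableEq ι]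
    (a : ι → ℂ) (i : ι) :
    star a ⬝ᵥ a = conj (a i) * a i + ((∑ j ∈ Finset.univ.erase i, ‖a j‖ ^ 2 : ℝ) : ℂ) := by
  simp only [dotProduct, Pi.star_apply, Complex.star_def, Complex.conj_mul', Complex.ofReal_sum,
    Complex.ofReal_pow]
  exact (Finset.add_sum_erase _ _ (Finset.mem_univ i)).symm

theorem charpoly_half_smul_vecMulVec_single_add {ι : Type*} [Fintype ι] [DecidableEq ι]
    (i : ι) (a : ι → ℂ) (hι : 2 ≤ Fintype.card ι) :
    ((1 / 2 : ℂ) •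
        (vecMulVec (Pi.single i 1) (star a) + vecMulVec a (star (Pi.single i 1)))).charpoly =
      X ^ (Fintype.card ι - 2) * (X ^ 2 - C ((a i).re : ℂ) * X -
        C (((∑ j ∈ Finset.univ.erase i, ‖a j‖ ^ 2) / 4 : ℝ) : ℂ)) := by
  set e : ι → ℂ := Pi.single i 1
  have hstar : star e = e := by simp [e, Pi.star_single]
  have htrace :
      ((1 / 2 : ℂ) • star a) ⬝ᵥ e + star e ⬝ᵥ ((1 / 2 : ℂ) • a) = ((a i).re : ℂ) := by
    simp only [hstar, e, dotProduct_single, single_dotProduct, Pi.smul_apply, Pi.star_apply,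
      Complex.star_def, smul_eq_mul, Complex.re_eq_add_conj]
    ring
  have hdet : ((1 / 2 : ℂ) • star a) ⬝ᵥ e * (star e ⬝ᵥ ((1 / 2 : ℂ) • a)) -
      ((1 / 2 : ℂ) • star a) ⬝ᵥ ((1 / 2 : ℂ) • a) * (star e ⬝ᵥ e) =
        -(((∑ j ∈ Finset.univ.erase i, ‖a j‖ ^ 2) / 4 : ℝ) : ℂ) := by
    simp only [hstar, e, dotProduct_single, single_dotProduct, Pi.smul_apply, Pi.star_apply,
      Complex.star_def, smul_eq_mul, dotProduct_smul, smul_dotProduct, Pi.single_eq_same,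
      dotProduct_star_self_eq_add_sum_erase a i]
    push_cast
    ring
  rw [smul_add, ← vecMulVec_smul, ← smul_vecMulVec,
    charpoly_vecMulVec_add_vecMulVec _ _ _ _ hι, htrace, hdet, C_neg, sub_eq_add_neg _ (C _)]

end Matrix

theorem isRoot_X_sq_sub_C_mul_X_sub_C {p q t : ℝ} (ht : t ^ 2 = p ^ 2 + 4 * q) :
    (X ^ 2 - C (p : ℂ) * X - C (q : ℂ)).IsRoot (((p + t) / 2 : ℝ) : ℂ) := by
  have : ((p + t) / 2) ^ 2 - p * ((p + t) / 2) - q = 0 := by linear_combination ht / 4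
  simp only [IsRoot, eval_sub, eval_pow, eval_mul, eval_C, eval_X]
  exact_mod_cast this

theorem stmt_2_general (N : ℕ) (hN : 2 ≤ N) (n : Fin N) (a : Fin N → ℂ)
    (R S : ℝ) (hR : R = (a n).re)
    (hS : S ^ 2 = ∑ m ∈ Finset.univ.erase n, ‖a m‖ ^ 2) :
    ∀ T : Matrix (Fin N) (Fin N) ℂ,
      T = (1 / 2 : ℂ) •
          (vecMulVec (Pi.single n 1) (star a) + vecMulVec a (star (Pi.single n 1))) →
      T.charpoly = X ^ (N - 2) * (X ^ 2 - C (R : ℂ) * X - C ((S ^ 2 / 4 : ℝ) : ℂ)) ∧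
      T.charpoly.IsRoot (((R + Real.sqrt (R ^ 2 + S ^ 2)) / 2 : ℝ) : ℂ) ∧
      T.charpoly.IsRoot (((R - Real.sqrt (R ^ 2 + S ^ 2)) / 2 : ℝ) : ℂ) ∧
      N - 2 ≤ T.charpoly.rootMultiplicity 0 := by
  rintro T rfl
  have hchar := charpoly_half_smul_vecMulVec_single_add n a (by simpa using hN)
  rw [Fintype.card_fin, ← hR, ← hS] at hchar
  have hquad_dvd := hchar ▸ dvd_mul_left (X ^ 2 - C (R : ℂ) * X - C ((S ^ 2 / 4 : ℝ) : ℂ)) _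
  have hsqrt : √(R ^ 2 + S ^ 2) ^ 2 = R ^ 2 + 4 * (S ^ 2 / 4) := by
    rw [Real.sq_sqrt (by positivity)]
    ring
  refine ⟨hchar, (isRoot_X_sq_sub_C_mul_X_sub_C hsqrt).dvd hquad_dvd, ?_, ?_⟩
  · rw [sub_eq_add_neg]
    exact (isRoot_X_sq_sub_C_mul_X_sub_C (by rwa [neg_sq])).dvd hquad_dvd
  · rw [le_rootMultiplicity_iff (charpoly_monic _).ne_zero, hchar, map_zero, sub_zero]
    exact dvd_mul_right _ _

/-- For `N ≥ 2`, the characteristic polynomial of `T = (1/2)(e_n aᴴ + a e_nᴴ)` equals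
`X^(N-2) * (X² - R X - S²/4)`; consequently `T` has the two eigenvalues
`(R ± √(R² + S²))/2` and the eigenvalue `0` with multiplicity `N - 2`. -/
theorem stmt_2 (N : ℕ) (hN : 2 ≤ N) (n : Fin N) (a : Fin N → ℂ)
    (R S : ℝ) (hR : R = (a n).re)
    (hS : S ^ 2 = ∑ m ∈ Finset.univ.erase n, ‖a m‖ ^ 2) (hS0 : 0 ≤ S) :
    ∀ T : Matrix (Fin N) (Fin N) ℂ,
      T = (1 / 2 : ℂ) •
          (vecMulVec (Pi.single n 1) (star a) + vecMulVec a (star (Pi.single n 1))) →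
      T.charpoly = X ^ (N - 2) * (X ^ 2 - C (R : ℂ) * X - C ((S ^ 2 / 4 : ℝ) : ℂ)) ∧
      T.charpoly.IsRoot (((R + Real.sqrt (R ^ 2 + S ^ 2)) / 2 : ℝ) : ℂ) ∧
      T.charpoly.IsRoot (((R - Real.sqrt (R ^ 2 + S ^ 2)) / 2 : ℝ) : ℂ) ∧
      N - 2 ≤ T.charpoly.rootMultiplicity 0 :=
  stmt_2_general N hN n a R S hR hS
end

section
/- For every real number λ satisfying λ² = R·λ + S²/4, the vector v = a + (2λ − a_n) e_n satisfies T *ᵥ v = λ • v; the n-th entry of v equals 2λ, so v ≠ 0 whenever λ ≠ 0. In particular the two real roots λ^± = (R ± √(R² + S²))/2 of this quadratic are eigenvalues of T with eigenvectors v^± = a + (2λ^± − a_n) e_n when S > 0. -/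
/-!
The vector `v = a + (2λ - aₙ) eₙ` is `a` with its `n`-th entry replaced by `2λ`. Since
`2T = eₙ aᴴ + a eₙᴴ`, we get `2 T v = (aᴴ v) eₙ + vₙ a = (S² + 2λ conj aₙ) eₙ + 2λ a`. Off the
`n`-th coordinate this is `2λ v`; at the `n`-th coordinate the eigenvalue equation reads
`S² + 2λ (aₙ + conj aₙ) = 4λ²`, i.e. `λ² = Rλ + S²/4`.
-/

open Matrix Finset Function

theorem add_smul_single_one_eq_update {ι R : Type*} [DecidableEq ι] [Ring R] (a : ι → R) (n : ι)
    (x : R) : a + (x - a n) • Pi.single n (1 : R) = update a n x := by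
  ext j
  rcases eq_or_ne j n with rfl | h <;> simp [*]

section

variable {ι : Type*} [Fintype ι] [DecidableEq ι]

theorem star_dotProduct_update_self (a : ι → ℂ) (n : ι) (x : ℂ) :
    star a ⬝ᵥ update a n x = ((∑ m ∈ univ.erase n, ‖a m‖ ^ 2 : ℝ) : ℂ) + star (a n) * x := by
  rw [dotProduct, ← add_sum_erase _ _ (mem_univ n), add_comm, update_self]
  congr 1
  push_cast
  refine sum_congr rfl fun m hm => ?_
  rw [update_of_ne (ne_of_mem_erase hm), Pi.star_apply, Complex.star_def, Complex.conj_mul']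

theorem mulVec_update_eq_smul (a : ι → ℂ) (n : ι) {lam : ℂ}
    (hlam : lam ^ 2 = (a n).re * lam + (∑ m ∈ univ.erase n, ‖a m‖ ^ 2 : ℝ) / 4) :
    ((1 / 2 : ℂ) • (vecMulVec (Pi.single n 1) (star a) + vecMulVec a (star (Pi.single n 1))))
      *ᵥ update a n (2 * lam) = lam • update a n (2 * lam) := by
  have hre : a n + star (a n) = 2 * (a n).re := by
    rw [Complex.star_def, Complex.add_conj]
    push_cast
    ring
  rw [smul_mulVec, add_mulVec, vecMulVec_mulVec, vecMulVec_mulVec, op_smul_eq_smul,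
    op_smul_eq_smul, star_dotProduct_update_self, ← Pi.single_star, star_one,
    single_one_dotProduct, update_self]
  ext j
  rcases eq_or_ne j n with rfl | h
  · simp only [Pi.smul_apply, Pi.add_apply, Pi.single_eq_same, update_self, smul_eq_mul]
    linear_combination (-2 : ℂ) * hlam + lam * hre
  · simp only [Pi.smul_apply, Pi.add_apply, Pi.single_eq_of_ne h, update_of_ne h, smul_eq_mul,
      mul_zero, zero_add]
    ring

end

theorem sq_eq_mul_add_of_eq_quadratic_root {R S lam : ℝ}
    (h : lam = (R + √(R ^ 2 + S ^ 2)) / 2 ∨ lam = (R - √(R ^ 2 + S ^ 2)) / 2) :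
    lam ^ 2 = R * lam + S ^ 2 / 4 := by
  have hsq : √(R ^ 2 + S ^ 2) ^ 2 = R ^ 2 + S ^ 2 := Real.sq_sqrt (by positivity)
  rcases h with rfl | rfl <;> linear_combination hsq / 4

theorem stmt_3_general (N : ℕ) (n : Fin N) (a : Fin N → ℂ)
    (R S : ℝ) (hR : R = (a n).re)
    (hS : S ^ 2 = ∑ m ∈ Finset.univ.erase n, ‖a m‖ ^ 2)
    (T : Matrix (Fin N) (Fin N) ℂ)
    (hT : T = (1 / 2 : ℂ) •
        (vecMulVec (Pi.single n 1) (star a) + vecMulVec a (star (Pi.single n 1)))) :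
    (∀ lam : ℝ, lam ^ 2 = R * lam + S ^ 2 / 4 →
      ∀ v : Fin N → ℂ, v = a + (((2 * lam : ℝ) : ℂ) - a n) • (Pi.single n 1 : Fin N → ℂ) →
        T.mulVec v = (lam : ℂ) • v ∧ v n = ((2 * lam : ℝ) : ℂ) ∧ (lam ≠ 0 → v ≠ 0)) ∧
    (0 < S →
      ∀ lam : ℝ,
        (lam = (R + Real.sqrt (R ^ 2 + S ^ 2)) / 2 ∨
          lam = (R - Real.sqrt (R ^ 2 + S ^ 2)) / 2) →
        ∀ v : Fin N → ℂ, v = a + (((2 * lam : ℝ) : ℂ) - a n) • (Pi.single n 1 : Fin N → ℂ) →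
          T.mulVec v = (lam : ℂ) • v ∧ v ≠ 0) := by
  have eigen : ∀ lam : ℝ, lam ^ 2 = R * lam + S ^ 2 / 4 →
      ∀ v : Fin N → ℂ, v = a + (((2 * lam : ℝ) : ℂ) - a n) • (Pi.single n 1 : Fin N → ℂ) →
        T.mulVec v = (lam : ℂ) • v ∧ v n = ((2 * lam : ℝ) : ℂ) ∧ (lam ≠ 0 → v ≠ 0) := by
    rintro lam hlam v rfl
    rw [add_smul_single_one_eq_update, Complex.ofReal_mul, Complex.ofReal_ofNat, hT]
    refine ⟨mulVec_update_eq_smul a n ?_, update_self .., fun hlam0 hv => hlam0 ?_⟩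
    · rw [← hR, ← hS]
      exact_mod_cast hlam
    · simpa using congrFun hv n
  refine ⟨eigen, fun hSpos lam hroot v hv => ?_⟩
  have hquad := sq_eq_mul_add_of_eq_quadratic_root hroot
  have hlam0 : lam ≠ 0 := by
    rintro rfl
    nlinarith
  obtain ⟨heigen, -, hne⟩ := eigen lam hquad v hv
  exact ⟨heigen, hne hlam0⟩

/-- For every real `λ` with `λ² = R λ + S²/4`, the vector `v = a + (2λ - a_n) e_n` satisfies
`T *ᵥ v = λ • v`, has `v n = 2λ`, hence is nonzero whenever `λ ≠ 0`.  In particular, when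
`S > 0`, the two real roots `λ± = (R ± √(R² + S²))/2` are eigenvalues of `T` with
eigenvectors `v± = a + (2λ± - a_n) e_n`. -/
theorem stmt_3 (N : ℕ) (hN : 1 ≤ N) (n : Fin N) (a : Fin N → ℂ)
    (R S : ℝ) (hR : R = (a n).re)
    (hS : S ^ 2 = ∑ m ∈ Finset.univ.erase n, ‖a m‖ ^ 2) (hS0 : 0 ≤ S)
    (T : Matrix (Fin N) (Fin N) ℂ)
    (hT : T = (1 / 2 : ℂ) •
        (vecMulVec (Pi.single n 1) (star a) + vecMulVec a (star (Pi.single n 1)))) :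
    (∀ lam : ℝ, lam ^ 2 = R * lam + S ^ 2 / 4 →
      ∀ v : Fin N → ℂ, v = a + (((2 * lam : ℝ) : ℂ) - a n) • (Pi.single n 1 : Fin N → ℂ) →
        T.mulVec v = (lam : ℂ) • v ∧ v n = ((2 * lam : ℝ) : ℂ) ∧ (lam ≠ 0 → v ≠ 0)) ∧
    (0 < S →
      ∀ lam : ℝ,
        (lam = (R + Real.sqrt (R ^ 2 + S ^ 2)) / 2 ∨
          lam = (R - Real.sqrt (R ^ 2 + S ^ 2)) / 2) →
        ∀ v : Fin N → ℂ, v = a + (((2 * lam : ℝ) : ℂ) - a n) • (Pi.single n 1 : Fin N → ℂ) →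
          T.mulVec v = (lam : ℂ) • v ∧ v ≠ 0) :=
  stmt_3_general N n a R S hR hS T hT
end
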